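/- Let n ≥ 2, M ≥ 2, and let T : ℝⁿ → ℝⁿ be an invertible affine map. For k ∈ {0,…,M−1}ⁿ let C_k = Π_{i=1}^{n} [k_i/M, (k_i+1)/M] be the grid cells of [0,1]ⁿ and let Q_k = T(C_k); let B = {k : at most one coordinate of k is nonzero}. Suppose f, g : T([0,1]ⁿ) → ℝ are continuous functions each of which is affine on every region Q_k. If f = g on Q_k for every k ∈ B, then f = g on all of T([0,1]ⁿ). That is, for a partition isomorphic under an affine transformation to the standard grid partition, the piecewise affine function is determined by its values on the boundary family of regions (boundary-determination principle). -/

import Mathlib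

/-!
Subtract the two functions and pull back along `T`: the difference `h` is affine on every grid
cell, and it suffices to show that it vanishes on every cell. Induct on the multi-index `k`.
If `k` is not a boundary index, two coordinates `k i`, `k j` are nonzero, and the lower faces
`xᵢ = kᵢ/M`, `xⱼ = kⱼ/M` of the cell lie in the smaller cells `k - eᵢ`, `k - eⱼ`, where `h`
vanishes by induction. An affine function vanishing on two lower faces of a box in different
directions vanishes at the corner and at every neighbouring corner, hence identically.
-/

open Set Function

theorem update_sub_self_eq_single {ι G : Type*} [DecidableEq ι] [AddGroup G] (a : ι → G) (m : ι)
    (t : G) :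
    update a m t - a = Pi.single m (t - a m) := by
  ext l
  rcases eq_or_ne l m with rfl | hl <;> simp [*]

theorem AffineMap.eq_zero_of_eq_zero_on_two_faces {𝕜 V ι : Type*} [Field 𝕜] [PartialOrder 𝕜]
    [AddCommGroup V] [Module 𝕜 V] [Finite ι] [DecidableEq ι] (φ : (ι → 𝕜) →ᵃ[𝕜] V) {a b : ι → 𝕜}
    (hab : ∀ m, a m < b m) {i j : ι} (hij : i ≠ j)
    (hi : ∀ x ∈ Icc a b, x i = a i → φ x = 0) (hj : ∀ x ∈ Icc a b, x j = a j → φ x = 0) :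
    φ = 0 := by
  have hle : a ≤ b := fun m => (hab m).le
  have ha : φ a = 0 := hi a (left_mem_Icc.2 hle) rfl
  have hcorner : ∀ m, φ (update a m (b m)) = 0 := by
    intro m
    have hmem : update a m (b m) ∈ Icc a b :=
      ⟨le_update_self_iff.2 (hab m).le, update_le_iff.2 ⟨le_rfl, fun l _ => hle l⟩⟩
    rcases eq_or_ne m i with rfl | hmi
    · exact hj _ hmem (update_of_ne hij.symm _ _)
    · exact hi _ hmem (update_of_ne hmi.symm _ _)
  have hlin : φ.linear = 0 := by
    refine LinearMap.pi_ext fun m t => ?_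
    have hstep : φ.linear (Pi.single m (b m - a m)) = 0 := by
      rw [← update_sub_self_eq_single, ← vsub_eq_sub, AffineMap.linearMap_vsub, hcorner, ha,
        vsub_self]
    have hne : b m - a m ≠ 0 := sub_ne_zero.2 (hab m).ne'
    rw [show Pi.single m t = (t / (b m - a m)) • Pi.single m (b m - a m) by
      rw [← Pi.single_smul, smul_eq_mul, div_mul_cancel₀ t hne], map_smul, hstep, smul_zero,
      LinearMap.zero_apply]
  exact AffineMap.ext_linear hlin ha

section Grid

variable {ι : Type*}

def gridCell (M : ℕ) (k : ι → ℕ) : Set (ι → ℝ) :=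
  {x | ∀ i, (k i : ℝ) / M ≤ x i ∧ x i ≤ ((k i : ℝ) + 1) / M}

def IsBoundaryIndex (k : ι → ℕ) : Prop :=
  ∀ i j, i ≠ j → k i = 0 ∨ k j = 0

theorem gridCell_eq_Icc (M : ℕ) (k : ι → ℕ) :
    gridCell M k = Icc (fun i => (k i : ℝ) / M) (fun i => ((k i : ℝ) + 1) / M) := by
  ext x
  simp [gridCell, Pi.le_def, forall_and]

theorem mem_gridCell_update_pred [DecidableEq ι] {M : ℕ} {k : ι → ℕ} {x : ι → ℝ} {i : ι} (hki : k i ≠ 0)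
    (hx : x ∈ gridCell M k) (hxi : x i = k i / M) :
    x ∈ gridCell M (update k i (k i - 1)) := by
  intro l
  rcases eq_or_ne l i with rfl | hl
  · have hcast : ((k l - 1 : ℕ) : ℝ) + 1 = k l := by
      rw [Nat.cast_pred (Nat.pos_of_ne_zero hki), sub_add_cancel]
    rw [update_self, hcast, hxi]
    exact ⟨div_le_div_of_nonneg_right (by simp) (Nat.cast_nonneg M), le_rfl⟩
  · rw [update_of_ne hl]
    exact hx l

theorem exists_nat_lt_mem_Icc_div {M : ℕ} (hM : 0 < M) {t : ℝ} (ht : t ∈ Icc (0 : ℝ) 1) :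
    ∃ k < M, (k : ℝ) / M ≤ t ∧ t ≤ ((k : ℝ) + 1) / M := by
  have hM' : (0 : ℝ) < M := Nat.cast_pos.2 hM
  have htM : 0 ≤ t * M := mul_nonneg ht.1 hM'.le
  rcases lt_or_ge ⌊t * M⌋₊ M with hlt | hge
  · refine ⟨⌊t * M⌋₊, hlt, ?_, ?_⟩
    · rw [div_le_iff₀ hM']
      exact Nat.floor_le htM
    · rw [le_div_iff₀ hM']
      exact (Nat.lt_floor_add_one _).le
  · refine ⟨M - 1, Nat.sub_lt hM one_pos, ?_, ?_⟩
    · have hfloor : (M : ℝ) ≤ t * M := (Nat.cast_le.2 hge).trans (Nat.floor_le htM)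
      rw [div_le_iff₀ hM', Nat.cast_pred hM]
      linarith
    · rw [Nat.cast_pred hM, sub_add_cancel, div_self hM'.ne']
      exact ht.2

theorem exists_gridCell_mem {M : ℕ} (hM : 0 < M) {x : ι → ℝ} (hx : x ∈ Icc 0 1) :
    ∃ k : ι → ℕ, (∀ i, k i < M) ∧ x ∈ gridCell M k := by
  choose k hkM hk using fun i => exists_nat_lt_mem_Icc_div hM ⟨hx.1 i, hx.2 i⟩
  exact ⟨k, hkM, hk⟩

theorem eqOn_zero_of_affine_on_gridCells [Finite ι] [DecidableEq ι] {M : ℕ} {h : (ι → ℝ) → ℝ}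
    (haff : ∀ k, (∀ i, k i < M) → ∃ φ : (ι → ℝ) →ᵃ[ℝ] ℝ, EqOn h φ (gridCell M k))
    (hbd : ∀ k, (∀ i, k i < M) → IsBoundaryIndex k → EqOn h 0 (gridCell M k))
    (k : ι → ℕ) (hk : ∀ i, k i < M) : EqOn h 0 (gridCell M k) := by
  induction k using WellFoundedLT.induction with
  | _ k ih =>
  by_cases hB : IsBoundaryIndex k
  · exact hbd k hk hB
  obtain ⟨i, j, hij, hki, hkj⟩ : ∃ i j, i ≠ j ∧ k i ≠ 0 ∧ k j ≠ 0 := by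
    simpa [IsBoundaryIndex] using hB
  obtain ⟨φ, hφ⟩ := haff k hk
  have hface : ∀ l, k l ≠ 0 → ∀ x ∈ gridCell M k, x l = k l / M → φ x = 0 := by
    intro l hkl x hx hxl
    have hlt : update k l (k l - 1) < k := update_lt_self_iff.2 (by omega)
    have hvalid : ∀ m, update k l (k l - 1) m < M := fun m => by
      rcases eq_or_ne m l with rfl | hm
      · rw [update_self]; have := hk m; omega
      · rw [update_of_ne hm]; exact hk m
    rw [← hφ hx]
    exact ih _ hlt hvalid (mem_gridCell_update_pred hkl hx hxl)
  have hM : (0 : ℝ) < M := Nat.cast_pos.2 ((Nat.zero_le _).trans_lt (hk i))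
  have hφ0 : φ = 0 := by
    rw [gridCell_eq_Icc] at hface
    refine φ.eq_zero_of_eq_zero_on_two_faces (fun m => ?_) hij (hface i hki) (hface j hkj)
    exact div_lt_div_of_pos_right (lt_add_one _) hM
  intro x hx
  rw [hφ hx, hφ0]
  rfl

end Grid

theorem exists_affineMap_eqOn_of_sum_mul_add {ι : Type*} [Fintype ι] {f : (ι → ℝ) → ℝ}
    {S : Set (ι → ℝ)} (h : ∃ (a : ι → ℝ) (c : ℝ), ∀ y ∈ S, f y = (∑ j, a j * y j) + c) :
    ∃ φ : (ι → ℝ) →ᵃ[ℝ] ℝ, EqOn f φ S := by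
  obtain ⟨a, c, hac⟩ := h
  exact ⟨(dotProductBilin ℝ ℝ a).toAffineMap + AffineMap.const ℝ _ c, fun y hy => hac y hy⟩

theorem boundary_determination_affine_isomorphic_partition_general
    (n M : ℕ) (hM : 2 ≤ M)
    (T : (Fin n → ℝ) ≃ᵃ[ℝ] (Fin n → ℝ))
    (f g : (Fin n → ℝ) → ℝ)
    (hfa : ∀ k : Fin n → ℕ, (∀ i, k i < M) →
      ∃ (a : Fin n → ℝ) (c : ℝ),
        ∀ y ∈ ⇑T '' {x : Fin n → ℝ |
            ∀ i, (k i : ℝ) / M ≤ x i ∧ x i ≤ ((k i : ℝ) + 1) / M},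
          f y = (∑ j, a j * y j) + c)
    (hga : ∀ k : Fin n → ℕ, (∀ i, k i < M) →
      ∃ (a : Fin n → ℝ) (c : ℝ),
        ∀ y ∈ ⇑T '' {x : Fin n → ℝ |
            ∀ i, (k i : ℝ) / M ≤ x i ∧ x i ≤ ((k i : ℝ) + 1) / M},
          g y = (∑ j, a j * y j) + c)
    (hbd : ∀ k : Fin n → ℕ, (∀ i, k i < M) →
      (∀ i j, i ≠ j → k i = 0 ∨ k j = 0) →
      ∀ y ∈ ⇑T '' {x : Fin n → ℝ |
          ∀ i, (k i : ℝ) / M ≤ x i ∧ x i ≤ ((k i : ℝ) + 1) / M},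
        f y = g y) :
    ∀ y ∈ ⇑T '' Icc (0 : Fin n → ℝ) 1, f y = g y := by
  have hdiff : ∀ k : Fin n → ℕ, (∀ i, k i < M) →
      ∃ φ : (Fin n → ℝ) →ᵃ[ℝ] ℝ, EqOn (fun x => f (T x) - g (T x)) φ (gridCell M k) := by
    intro k hk
    obtain ⟨φ, hφ⟩ := exists_affineMap_eqOn_of_sum_mul_add (hfa k hk)
    obtain ⟨ψ, hψ⟩ := exists_affineMap_eqOn_of_sum_mul_add (hga k hk)
    exact ⟨(φ - ψ).comp T.toAffineMap, fun x hx =>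
      by simp [hφ (mem_image_of_mem T hx), hψ (mem_image_of_mem T hx)]⟩
  have hzero := eqOn_zero_of_affine_on_gridCells hdiff fun k hk hB x hx =>
    sub_eq_zero.2 (hbd k hk hB (T x) (mem_image_of_mem T hx))
  rintro _ ⟨x, hx, rfl⟩
  obtain ⟨k, hk, hxk⟩ := exists_gridCell_mem (M := M) (by omega) hx
  exact sub_eq_zero.1 (hzero k hk hxk)

/-- Boundary-determination principle for a partition affinely
isomorphic to the standard grid: if two continuous functions, each affine on
every region `Q_k = T(C_k)` (the image of a grid cell under an invertible
affine map `T`), agree on the boundary family of regions (those whose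
multi-index has at most one nonzero coordinate), then they agree on all of
`T([0,1]ⁿ)`. -/
theorem boundary_determination_affine_isomorphic_partition
    (n M : ℕ) (hn : 2 ≤ n) (hM : 2 ≤ M)
    (T : (Fin n → ℝ) ≃ᵃ[ℝ] (Fin n → ℝ))
    (f g : (Fin n → ℝ) → ℝ)
    (hfc : ContinuousOn f (⇑T '' Icc 0 1)) (hgc : ContinuousOn g (⇑T '' Icc 0 1))
    (hfa : ∀ k : Fin n → ℕ, (∀ i, k i < M) →
      ∃ (a : Fin n → ℝ) (c : ℝ),
        ∀ y ∈ ⇑T '' {x : Fin n → ℝ |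
            ∀ i, (k i : ℝ) / M ≤ x i ∧ x i ≤ ((k i : ℝ) + 1) / M},
          f y = (∑ j, a j * y j) + c)
    (hga : ∀ k : Fin n → ℕ, (∀ i, k i < M) →
      ∃ (a : Fin n → ℝ) (c : ℝ),
        ∀ y ∈ ⇑T '' {x : Fin n → ℝ |
            ∀ i, (k i : ℝ) / M ≤ x i ∧ x i ≤ ((k i : ℝ) + 1) / M},
          g y = (∑ j, a j * y j) + c)
    (hbd : ∀ k : Fin n → ℕ, (∀ i, k i < M) →
      (∀ i j, i ≠ j → k i = 0 ∨ k j = 0) →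
      ∀ y ∈ ⇑T '' {x : Fin n → ℝ |
          ∀ i, (k i : ℝ) / M ≤ x i ∧ x i ≤ ((k i : ℝ) + 1) / M},
        f y = g y) :
    ∀ y ∈ ⇑T '' Icc (0 : Fin n → ℝ) 1, f y = g y :=
  boundary_determination_affine_isomorphic_partition_general n M hM T f g hfa hga hbd
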